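/- Let μ = 1 and ν = −1/2, and let f(x) = exp(−(x − 5/2)²) for x ≥ 0. Define u(t,x) = ∫₀^∞ f(y) G(t;x,y) dy − ∫₀^∞ f'(y) H(t;x,y) dy for t > 0 and x ≥ 0 (with the kernels G and H formed with these μ and ν). Then u takes negative values: there exist t > 0 and x ≥ 0 with u(t,x) < 0, even though f is strictly positive. -/

import Mathlib

open MeasureTheory Set Filter

/-- Standard normal density. -/
noncomputable def phi (x : ℝ) : ℝ := (1 / Real.sqrt (2 * Real.pi)) * Real.exp (-x ^ 2 / 2)

/-- Standard normal tail function. -/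
noncomputable def Psi (x : ℝ) : ℝ := ∫ y in Set.Ioi x, phi y

/-- The kernel `G(t;x,y)` with drift parameter `μ`. -/
noncomputable def Gker (μ t x y : ℝ) : ℝ :=
  (1 / Real.sqrt t) *
      (Real.exp (2 * μ * y) * phi ((x + y + μ * t) / Real.sqrt t) +
        phi ((x - y + μ * t) / Real.sqrt t)) -
    2 * μ * Real.exp (2 * μ * y) * Psi ((x + y + μ * t) / Real.sqrt t)

/-- The kernel `H(t;x,y)` with parameters `μ, ν`. -/
noncomputable def Hker (μ ν t x y : ℝ) : ℝ :=
  if ν = μ then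
    2 * Real.exp (2 * μ * y) *
      ((1 + μ * (x + y + μ * t)) * Psi ((x + y + μ * t) / Real.sqrt t) -
        μ * Real.sqrt t * phi ((x + y + μ * t) / Real.sqrt t))
  else
    Real.exp (2 * μ * y) / (ν - μ) *
      ((2 * ν - μ) * Real.exp (2 * (ν - μ) * (x + y + ν * t)) *
          Psi ((x + y + (2 * ν - μ) * t) / Real.sqrt t) -
        μ * Psi ((x + y + μ * t) / Real.sqrt t))

/-- The density `g(t;b,s)` of `(B_t^{-μ}, S_t^{-μ})`, vanishing off `{b ≤ s, 0 ≤ s}`. -/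
noncomputable def gker (μ t b s : ℝ) : ℝ :=
  if b ≤ s ∧ 0 ≤ s then
    Real.sqrt (2 / Real.pi) * t ^ (-(3 : ℝ) / 2) * (2 * s - b) *
      Real.exp (-(2 * s - b) ^ 2 / (2 * t) - μ * (b + μ * t / 2))
  else 0

/-- Spatial derivative (one-sided at `x = 0`). -/
noncomputable def ux (u : ℝ → ℝ → ℝ) (t x : ℝ) : ℝ :=
  derivWithin (fun z => u t z) (Set.Ici 0) x

/-- Second spatial derivative (one-sided at `x = 0`). -/
noncomputable def uxx (u : ℝ → ℝ → ℝ) (t x : ℝ) : ℝ :=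
  derivWithin (fun z => ux u t z) (Set.Ici 0) x

/-- Time derivative. -/
noncomputable def ut (u : ℝ → ℝ → ℝ) (t x : ℝ) : ℝ :=
  deriv (fun s => u s x) t

/-- `u` is a solution of the Stroock–Williams problem with parameters `μ, ν`
and initial data `f`. -/
def IsSWSolution (μ ν : ℝ) (f : ℝ → ℝ) (u : ℝ → ℝ → ℝ) : Prop :=
  ContDiffOn ℝ (⊤ : ℕ∞) (fun p : ℝ × ℝ => u p.1 p.2) (Set.Ioi 0 ×ˢ Set.Ici 0) ∧
  (∀ T > (0 : ℝ),
    ContinuousOn (fun p : ℝ × ℝ => u p.1 p.2) (Set.Icc 0 T ×ˢ Set.Ici 0) ∧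
    ContinuousOn (fun p : ℝ × ℝ => ux u p.1 p.2) (Set.Icc 0 T ×ˢ Set.Ici 0) ∧
    ∃ C : ℝ, ∀ p ∈ Set.Icc (0 : ℝ) T ×ˢ Set.Ici (0 : ℝ),
      |u p.1 p.2| ≤ C ∧ |ux u p.1 p.2| ≤ C) ∧
  (∀ t > (0 : ℝ), Filter.Tendsto (fun x => u t x) Filter.atTop (nhds 0)) ∧
  (∀ t > (0 : ℝ), ∀ x ≥ (0 : ℝ), ut u t x = μ * ux u t x + (1 / 2) * uxx u t x) ∧
  (∀ x ≥ (0 : ℝ), u 0 x = f x) ∧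
  (∀ t > (0 : ℝ), ut u t 0 = ν * ux u t 0)

/-- `f` is admissible initial data: `C¹` on `[0,∞)` with `f` and `f'` bounded
and `f(x) → 0` as `x → ∞`. -/
def IsInitialData (f : ℝ → ℝ) : Prop :=
  ContDiffOn ℝ 1 f (Set.Ici 0) ∧
  (∃ C : ℝ, ∀ x ∈ Set.Ici (0 : ℝ), |f x| ≤ C ∧ |derivWithin f (Set.Ici 0) x| ≤ C) ∧
  Filter.Tendsto f Filter.atTop (nhds 0)

lemma phi_nonneg (x : ℝ) : 0 ≤ phi x := by
  unfold phi
  positivity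

lemma phi_eq (x : ℝ) : phi x = (1 / Real.sqrt (2 * Real.pi)) * Real.exp (-(1/2) * x ^ 2) := by
  unfold phi; ring_nf

lemma integrable_phi : Integrable phi := by
  have h := (integrable_exp_neg_mul_sq (b := 1/2) (by norm_num)).const_mul
      (1 / Real.sqrt (2 * Real.pi))
  refine h.congr ?_
  filter_upwards with x
  rw [phi_eq]

lemma sqrt_two_pi_pos : 0 < Real.sqrt (2 * Real.pi) := by
  positivity

lemma integral_phi : ∫ x, phi x = 1 := by
  have h2 := integral_gaussian (1/2)
  have : ∫ x, phi x = (1 / Real.sqrt (2 * Real.pi)) * ∫ x : ℝ, Real.exp (-(1/2) * x ^ 2) := by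
    rw [← integral_const_mul]
    congr 1; ext x; rw [phi_eq]
  rw [this, h2, show Real.pi / (1/2) = 2 * Real.pi by ring, one_div,
    inv_mul_cancel₀ sqrt_two_pi_pos.ne']

lemma Psi_nonneg (x : ℝ) : 0 ≤ Psi x :=
  setIntegral_nonneg measurableSet_Ioi fun y _ => phi_nonneg y

lemma Psi_le_one (x : ℝ) : Psi x ≤ 1 := by
  rw [← integral_phi]
  exact setIntegral_le_integral integrable_phi (Filter.Eventually.of_forall phi_nonneg)

lemma Psi_anti : Antitone Psi := by
  intro a b hab
  exact setIntegral_mono_set integrable_phi.integrableOn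
    (Filter.Eventually.of_forall phi_nonneg) (Filter.Eventually.of_forall (Ioi_subset_Ioi hab))

lemma measurable_Psi : Measurable Psi := Psi_anti.measurable

lemma Psi_zero : Psi 0 = 1/2 := by
  unfold Psi
  have h2 := integral_gaussian_Ioi (1/2)
  have : ∫ y in Set.Ioi (0:ℝ), phi y
      = (1 / Real.sqrt (2 * Real.pi)) * ∫ y in Set.Ioi (0:ℝ), Real.exp (-(1/2) * y ^ 2) := by
    rw [← integral_const_mul]
    congr 1; ext y; rw [phi_eq]
  rw [this, h2, show Real.pi / (1/2) = 2 * Real.pi by ring, one_div]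
  rw [div_eq_mul_one_div (Real.sqrt (2*Real.pi)) 2, ← mul_assoc,
    inv_mul_cancel₀ sqrt_two_pi_pos.ne']
  norm_num

lemma half_le_Psi {x : ℝ} (hx : x ≤ 0) : 1/2 ≤ Psi x := by
  rw [← Psi_zero]; exact Psi_anti hx

lemma setIntegral_Ioi_comp_sub (g : ℝ → ℝ) (a c : ℝ) :
    ∫ y in Set.Ioi a, g (y - c) = ∫ z in Set.Ioi (a - c), g z := by
  have h1 : MeasurePreserving (fun x : ℝ => x - c) volume volume :=
    measurePreserving_sub_right volume c
  have h2 : MeasurableEmbedding (fun x : ℝ => x - c) :=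
    (Homeomorph.subRight c).measurableEmbedding
  have h3 : (fun x : ℝ => x - c) ⁻¹' (Set.Ioi (a - c)) = Set.Ioi a := by
    ext x; simp [sub_lt_sub_iff_right]
  rw [← h3, h1.setIntegral_preimage_emb h2]

lemma integrable_gauss_shift (c : ℝ) : Integrable (fun y : ℝ => Real.exp (-(y - c)^2)) := by
  have := (integrable_exp_neg_mul_sq (b := 1) one_pos).comp_sub_right c
  refine this.congr ?_
  filter_upwards with x
  ring_nf

lemma integral_gauss_shift (c : ℝ) :
    ∫ y : ℝ, Real.exp (-(y - c)^2) = Real.sqrt Real.pi := by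
  have h := integral_sub_right_eq_self (μ := volume) (fun x : ℝ => Real.exp (-1 * x^2)) c
  have h2 := integral_gaussian 1
  rw [show Real.pi / 1 = Real.pi by ring] at h2
  calc ∫ y : ℝ, Real.exp (-(y - c)^2) = ∫ y : ℝ, Real.exp (-1 * (y - c)^2) := by
        congr 1; ext y; ring_nf
    _ = ∫ x : ℝ, Real.exp (-1 * x^2) := h
    _ = Real.sqrt Real.pi := h2

lemma integral_Ioi_gauss_shift (c : ℝ) :
    ∫ y in Set.Ioi c, Real.exp (-(y - c)^2) = Real.sqrt Real.pi / 2 := by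
  have h := setIntegral_Ioi_comp_sub (fun z => Real.exp (-z^2)) c c
  simp only [sub_self] at h
  rw [h]
  have h2 := integral_gaussian_Ioi 1
  rw [show Real.pi / 1 = Real.pi by ring] at h2
  rw [← h2]
  congr 1; ext z; ring_nf

lemma integral_Ioi_gauss_le (a c : ℝ) :
    ∫ y in Set.Ioi a, Real.exp (-(y - c)^2) ≤ Real.sqrt Real.pi := by
  rw [← integral_gauss_shift c]
  exact setIntegral_le_integral (integrable_gauss_shift c)
    (Filter.Eventually.of_forall fun y => (Real.exp_pos _).le)

lemma sqrt_pi_le : Real.sqrt Real.pi ≤ 1.78 := by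
  rw [show (1.78:ℝ) = Real.sqrt (1.78^2) by rw [Real.sqrt_sq]; norm_num]
  apply Real.sqrt_le_sqrt
  nlinarith [Real.pi_lt_d20.le]

lemma Psi_le_gauss {x : ℝ} (hx : 0 ≤ x) : Psi x ≤ Real.exp (-x^2/2) / 2 := by
  have key : Psi x ≤ ∫ y in Set.Ioi x, Real.exp (-x^2/2) * phi (y - x) := by
    apply setIntegral_mono_on integrable_phi.integrableOn
    · exact (((integrable_phi.comp_sub_right x)).const_mul _).integrableOn
    · exact measurableSet_Ioi
    · intro y hy
      simp only [Set.mem_Ioi] at hy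
      unfold phi
      rw [mul_comm (Real.exp (-x^2/2)), mul_assoc, ← Real.exp_add]
      apply mul_le_mul_of_nonneg_left _ (by positivity)
      apply Real.exp_le_exp.2
      nlinarith
  have h2 : ∫ y in Set.Ioi x, Real.exp (-x^2/2) * phi (y - x)
      = Real.exp (-x^2/2) * ∫ y in Set.Ioi x, phi (y - x) := integral_const_mul _ _
  have h3 : ∫ y in Set.Ioi x, phi (y - x) = Psi 0 := by
    rw [setIntegral_Ioi_comp_sub phi x x, sub_self]; rfl
  rw [h2, h3, Psi_zero] at key
  linarith


lemma Gker_eval (y : ℝ) :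
    Gker 1 8 0 y
      = (1 / Real.sqrt 8) * (Real.exp (2*y) * phi ((y + 8) / Real.sqrt 8)
          + phi ((8 - y) / Real.sqrt 8))
        - 2 * Real.exp (2*y) * Psi ((y + 8) / Real.sqrt 8) := by
  unfold Gker
  rw [show (0:ℝ) + y + 1 * 8 = y + 8 from by ring,
    show (0:ℝ) - y + 1 * 8 = 8 - y from by ring,
    show (2:ℝ) * 1 * y = 2 * y from by ring]
  ring

lemma Hker_eval (y : ℝ) :
    Hker 1 (-(1/2)) 8 0 y
      = (4/3) * Real.exp (12 - y) * Psi ((y - 16) / Real.sqrt 8)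
        + (2/3) * Real.exp (2*y) * Psi ((y + 8) / Real.sqrt 8) := by
  unfold Hker
  rw [if_neg (by norm_num)]
  rw [show (0:ℝ) + y + (2 * (-(1/2)) - 1) * 8 = y - 16 from by ring,
    show (0:ℝ) + y + 1 * 8 = y + 8 from by ring,
    show (2:ℝ) * ((-(1/2)) - 1) * (0 + y + (-(1/2)) * 8) = 12 - 3*y from by ring,
    show (2:ℝ) * 1 * y = 2 * y from by ring,
    show Real.exp (12 - y) = Real.exp (12 - 3*y) * Real.exp (2*y) from by
      rw [← Real.exp_add]; ring_nf]
  ring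


section Bounds

lemma sqrt8_pos : (0:ℝ) < Real.sqrt 8 := by positivity

lemma sqrt8_ge : (5/2 : ℝ) ≤ Real.sqrt 8 := by
  rw [show (5/2:ℝ) = Real.sqrt ((5/2)^2) by rw [Real.sqrt_sq]; norm_num]
  exact Real.sqrt_le_sqrt (by norm_num)

lemma one_div_sqrt8_le : 1 / Real.sqrt 8 ≤ 2/5 := by
  rw [div_le_iff₀ sqrt8_pos]; nlinarith [sqrt8_ge]

lemma sqrt_two_pi_ge : (5/2:ℝ) ≤ Real.sqrt (2*Real.pi) := by
  rw [show (5/2:ℝ) = Real.sqrt ((5/2)^2) by rw [Real.sqrt_sq]; norm_num]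
  exact Real.sqrt_le_sqrt (by nlinarith [Real.pi_gt_d6])

lemma one_div_sqrt_two_pi_le : 1 / Real.sqrt (2*Real.pi) ≤ 2/5 := by
  rw [div_le_iff₀ sqrt_two_pi_pos]; nlinarith [sqrt_two_pi_ge]

lemma phi_le (x : ℝ) : phi x ≤ 2/5 := by
  unfold phi
  have h1 : Real.exp (-x^2/2) ≤ 1 := Real.exp_le_one_iff.mpr (by nlinarith [sq_nonneg x])
  have h2 := one_div_sqrt_two_pi_le
  have h3 : (0:ℝ) < 1 / Real.sqrt (2*Real.pi) := by positivity
  nlinarith [Real.exp_pos (-x^2/2)]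

lemma phi_div_sqrt8 (a : ℝ) : phi (a / Real.sqrt 8)
    = (1/Real.sqrt (2*Real.pi)) * Real.exp (-a^2/16) := by
  unfold phi
  congr 2
  rw [div_pow, Real.sq_sqrt (by norm_num : (0:ℝ) ≤ 8)]
  ring

lemma Psi_tail (y : ℝ) (hy : 0 ≤ y) :
    2 * Real.exp (2*y) * Psi ((y+8)/Real.sqrt 8) ≤ Real.exp (y - 4) := by
  have ha : 0 ≤ (y+8)/Real.sqrt 8 := by positivity
  have h := Psi_le_gauss ha
  have hsq : ((y+8)/Real.sqrt 8)^2 = (y+8)^2/8 := by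
    rw [div_pow, Real.sq_sqrt (by norm_num : (0:ℝ) ≤ 8)]
  rw [hsq] at h
  have h2 : Real.exp (2*y) * Real.exp (-((y+8)^2/8)/2) ≤ Real.exp (y-4) := by
    rw [← Real.exp_add]; apply Real.exp_le_exp.2; nlinarith [sq_nonneg y]
  calc 2 * Real.exp (2*y) * Psi ((y+8)/Real.sqrt 8)
      ≤ 2 * Real.exp (2*y) * (Real.exp (-((y+8)^2/8)/2)/2) := by
        apply mul_le_mul_of_nonneg_left h (by positivity)
    _ = Real.exp (2*y) * Real.exp (-((y+8)^2/8)/2) := by ring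
    _ ≤ Real.exp (y-4) := h2

lemma Gker_le (y : ℝ) (hy : 0 ≤ y) : Gker 1 8 0 y ≤ (4/25) * (Real.exp (y-4) + 1) := by
  rw [Gker_eval]
  have h1 : Real.exp (2*y) * phi ((y+8)/Real.sqrt 8) ≤ (2/5) * Real.exp (y-4) := by
    rw [phi_div_sqrt8]
    have hb := one_div_sqrt_two_pi_le
    have h2 : Real.exp (2*y) * Real.exp (-(y+8)^2/16) ≤ Real.exp (y-4) := by
      rw [← Real.exp_add]; apply Real.exp_le_exp.2; nlinarith [sq_nonneg y]
    calc Real.exp (2*y) * ((1/Real.sqrt (2*Real.pi)) * Real.exp (-(y+8)^2/16))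
        ≤ Real.exp (2*y) * ((2/5) * Real.exp (-(y+8)^2/16)) := by
          apply mul_le_mul_of_nonneg_left _ (Real.exp_pos _).le
          apply mul_le_mul_of_nonneg_right hb (Real.exp_pos _).le
      _ = (2/5) * (Real.exp (2*y) * Real.exp (-(y+8)^2/16)) := by ring
      _ ≤ (2/5) * Real.exp (y-4) := by linarith
  have h2 : phi ((8-y)/Real.sqrt 8) ≤ 2/5 := phi_le _
  have h3 : 0 ≤ 2 * Real.exp (2*y) * Psi ((y+8)/Real.sqrt 8) :=
    mul_nonneg (by positivity) (Psi_nonneg _)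
  have h4 : (1/Real.sqrt 8) * (Real.exp (2*y) * phi ((y+8)/Real.sqrt 8)
      + phi ((8-y)/Real.sqrt 8)) ≤ (2/5) * ((2/5) * Real.exp (y-4) + 2/5) := by
    apply mul_le_mul one_div_sqrt8_le (by linarith)
    · exact add_nonneg (mul_nonneg (Real.exp_pos _).le (phi_nonneg _)) (phi_nonneg _)
    · norm_num
  have h5 : (2/5 : ℝ) * ((2/5) * Real.exp (y-4) + 2/5) = (4/25) * (Real.exp (y-4) + 1) := by
    ring
  linarith

lemma Gker_ge (y : ℝ) (hy : 0 ≤ y) : -(Real.exp (y-4)) ≤ Gker 1 8 0 y := by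
  rw [Gker_eval]
  have h1 := Psi_tail y hy
  have h2 : 0 ≤ (1/Real.sqrt 8) * (Real.exp (2*y) * phi ((y+8)/Real.sqrt 8)
      + phi ((8-y)/Real.sqrt 8)) := by
    apply mul_nonneg (by positivity)
    exact add_nonneg (mul_nonneg (Real.exp_pos _).le (phi_nonneg _)) (phi_nonneg _)
  linarith

lemma Hker_nonneg (y : ℝ) : 0 ≤ Hker 1 (-(1/2)) 8 0 y := by
  rw [Hker_eval]
  have h1 := Psi_nonneg ((y-16)/Real.sqrt 8)
  have h2 := Psi_nonneg ((y+8)/Real.sqrt 8)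
  have e1 := (Real.exp_pos (12-y)).le
  have e2 := (Real.exp_pos (2*y)).le
  positivity

lemma Hker_ge (y : ℝ) (hy : y ≤ 5/2) :
    (2/3) * Real.exp (12 - y) ≤ Hker 1 (-(1/2)) 8 0 y := by
  rw [Hker_eval]
  have hA : 1/2 ≤ Psi ((y-16)/Real.sqrt 8) :=
    half_le_Psi (div_nonpos_of_nonpos_of_nonneg (by linarith) sqrt8_pos.le)
  have hB : 0 ≤ Psi ((y+8)/Real.sqrt 8) := Psi_nonneg _
  nlinarith [Real.exp_pos (12-y), Real.exp_pos (2*y)]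

lemma Hker_le (y : ℝ) (hy : 0 ≤ y) :
    Hker 1 (-(1/2)) 8 0 y ≤ (4/3) * Real.exp (12-y) + (1/3) * Real.exp (y-4) := by
  rw [Hker_eval]
  have hA : Psi ((y-16)/Real.sqrt 8) ≤ 1 := Psi_le_one _
  have hAn : 0 ≤ Psi ((y-16)/Real.sqrt 8) := Psi_nonneg _
  have hB := Psi_tail y hy
  nlinarith [Real.exp_pos (12-y), Real.exp_pos (2*y)]

lemma key_scalar (y : ℝ) (hy : 5/2 ≤ y) : (2*y - 5) * Real.exp (7/2 - y) ≤ 2 := by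
  have h := Real.add_one_le_exp (y - 7/2)
  have h2 : (2*y-5) ≤ 2 * Real.exp (y - 7/2) := by linarith
  calc (2*y-5) * Real.exp (7/2-y) ≤ (2*Real.exp (y-7/2)) * Real.exp (7/2-y) :=
        mul_le_mul_of_nonneg_right h2 (Real.exp_pos _).le
    _ = 2 := by
        rw [mul_assoc, ← Real.exp_add, show y - 7/2 + (7/2 - y) = 0 by ring,
          Real.exp_zero, mul_one]


noncomputable def g1fun (y : ℝ) : ℝ := Real.exp (-(y - 5/2)^2) * Gker 1 8 0 y

noncomputable def g2fun (y : ℝ) : ℝ :=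
  (5 - 2*y) * Real.exp (-(y - 5/2)^2) * Hker 1 (-(1/2)) 8 0 y

lemma exp_three_le : Real.exp 3 ≤ 27 := by
  have h := Real.exp_one_lt_d9
  calc Real.exp 3 = Real.exp 1 ^ (3:ℕ) := by
        rw [show (3:ℝ) = ((3:ℕ):ℝ) * 1 by norm_num, Real.exp_nat_mul]
    _ ≤ 2.7182818286^(3:ℕ) := pow_le_pow_left₀ (Real.exp_pos 1).le h.le 3
    _ ≤ 27 := by norm_num

lemma deriv_f (y : ℝ) :
    deriv (fun z : ℝ => Real.exp (-(z - 5/2)^2)) y = (5 - 2*y) * Real.exp (-(y-5/2)^2) := by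
  have h1 : HasDerivAt (fun z : ℝ => -(z - 5/2)^2) (5 - 2*y) y := by
    have h := (((hasDerivAt_id y).sub_const (5/2)).pow 2).neg
    refine h.congr_deriv ?_
    simp; ring
  rw [h1.exp.deriv]; ring

lemma g1_le (y : ℝ) (hy : 0 ≤ y) :
    g1fun y ≤ (4/25) * (Real.exp (-(y-3)^2) + Real.exp (-(y-5/2)^2)) := by
  have h := Gker_le y hy
  have step : g1fun y ≤ Real.exp (-(y-5/2)^2) * ((4/25)*(Real.exp (y-4) + 1)) := by
    unfold g1fun; exact mul_le_mul_of_nonneg_left h (Real.exp_pos _).le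
  have e4 : Real.exp (-(y-5/2)^2) * Real.exp (y-4) = Real.exp (-(y-3)^2) * Real.exp (-5/4) := by
    rw [← Real.exp_add, ← Real.exp_add]; ring_nf
  have h5 : Real.exp (-5/4) ≤ 1 := Real.exp_le_one_iff.mpr (by norm_num)
  calc g1fun y ≤ Real.exp (-(y-5/2)^2) * ((4/25)*(Real.exp (y-4) + 1)) := step
    _ = (4/25) * (Real.exp (-(y-3)^2) * Real.exp (-5/4)) + (4/25)*Real.exp (-(y-5/2)^2) := by
        rw [show Real.exp (-(y-5/2)^2) * ((4/25)*(Real.exp (y-4) + 1))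
          = (4/25) * (Real.exp (-(y-5/2)^2) * Real.exp (y-4))
            + (4/25)*Real.exp (-(y-5/2)^2) by ring, e4]
    _ ≤ (4/25) * (Real.exp (-(y-3)^2) + Real.exp (-(y-5/2)^2)) := by
        nlinarith [Real.exp_pos (-(y-3)^2)]

lemma abs_g1_le (y : ℝ) (hy : 0 < y) : |g1fun y| ≤ 100 * Real.exp (-(y-3)^2) := by
  have hub := Gker_le y hy.le
  have hlb := Gker_ge y hy.le
  have habs : |Gker 1 8 0 y| ≤ Real.exp (y-4) + 1 := by
    rw [abs_le]; constructor
    · linarith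
    · nlinarith [Real.exp_pos (y-4)]
  have heq : |g1fun y| = Real.exp (-(y-5/2)^2) * |Gker 1 8 0 y| := by
    unfold g1fun; rw [abs_mul, abs_of_pos (Real.exp_pos _)]
  rw [heq]
  have step : Real.exp (-(y-5/2)^2) * |Gker 1 8 0 y|
      ≤ Real.exp (-(y-5/2)^2) * (Real.exp (y-4) + 1) :=
    mul_le_mul_of_nonneg_left habs (Real.exp_pos _).le
  have e4 : Real.exp (-(y-5/2)^2) * Real.exp (y-4) = Real.exp (-(y-3)^2) * Real.exp (-5/4) := by
    rw [← Real.exp_add, ← Real.exp_add]; ring_nf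
  have e5 : Real.exp (-(y-5/2)^2) = Real.exp (-(y-3)^2) * Real.exp (11/4-y) := by
    rw [← Real.exp_add]; ring_nf
  have h6 : Real.exp (11/4 - y) ≤ 27 :=
    le_trans (Real.exp_le_exp.2 (by linarith)) exp_three_le
  have h5 : Real.exp (-5/4) ≤ 1 := Real.exp_le_one_iff.mpr (by norm_num)
  nlinarith [Real.exp_pos (-(y-3)^2), Real.exp_pos (-(y-5/2)^2), Real.exp_pos (y-4),
    Real.exp_pos (11/4-y), Real.exp_pos (-5/4)]

lemma g2_tail_ge (y : ℝ) (hy : 5/2 ≤ y) :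
    -((8/3)*Real.exp (17/2) * Real.exp (-(y-5/2)^2)
        + (2/3)*Real.exp (-3/2) * Real.exp (-(y-7/2)^2))
      ≤ g2fun y := by
  have hH := Hker_le y (by linarith)
  have hks := key_scalar y hy
  have hw : 0 ≤ 2*y - 5 := by linarith
  have hmain : (2*y-5) * Real.exp (-(y-5/2)^2) * Hker 1 (-(1/2)) 8 0 y
      ≤ (2*y-5) * Real.exp (-(y-5/2)^2) * ((4/3)*Real.exp (12-y) + (1/3)*Real.exp (y-4)) :=
    mul_le_mul_of_nonneg_left hH (mul_nonneg hw (Real.exp_pos _).le)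
  have s1 : (2*y-5) * Real.exp (12-y) ≤ 2 * Real.exp (17/2) := by
    have e1 : Real.exp (12-y) = Real.exp (7/2-y) * Real.exp (17/2) := by
      rw [← Real.exp_add]; ring_nf
    calc (2*y-5) * Real.exp (12-y) = ((2*y-5) * Real.exp (7/2-y)) * Real.exp (17/2) := by
          rw [e1]; ring
      _ ≤ 2 * Real.exp (17/2) := mul_le_mul_of_nonneg_right hks (Real.exp_pos _).le
  have t1 : (2*y-5) * Real.exp (-(y-5/2)^2) * ((4/3)*Real.exp (12-y))
      ≤ (8/3)*Real.exp (17/2) * Real.exp (-(y-5/2)^2) := by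
    calc (2*y-5) * Real.exp (-(y-5/2)^2) * ((4/3)*Real.exp (12-y))
        = (4/3) * Real.exp (-(y-5/2)^2) * ((2*y-5) * Real.exp (12-y)) := by ring
      _ ≤ (4/3) * Real.exp (-(y-5/2)^2) * (2 * Real.exp (17/2)) :=
          mul_le_mul_of_nonneg_left s1 (by positivity)
      _ = (8/3)*Real.exp (17/2) * Real.exp (-(y-5/2)^2) := by ring
  have t2 : (2*y-5) * Real.exp (-(y-5/2)^2) * ((1/3)*Real.exp (y-4))
      ≤ (2/3)*Real.exp (-3/2) * Real.exp (-(y-7/2)^2) := by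
    have e2 : Real.exp (-(y-5/2)^2) * Real.exp (y-4)
        = Real.exp (7/2-y) * (Real.exp (-3/2) * Real.exp (-(y-7/2)^2)) := by
      rw [← Real.exp_add, ← Real.exp_add, ← Real.exp_add]; ring_nf
    calc (2*y-5) * Real.exp (-(y-5/2)^2) * ((1/3)*Real.exp (y-4))
        = ((1/3) * ((2*y-5) * Real.exp (7/2-y)))
            * (Real.exp (-3/2) * Real.exp (-(y-7/2)^2)) := by
          rw [show (2*y-5) * Real.exp (-(y-5/2)^2) * ((1/3)*Real.exp (y-4))
              = (1/3) * (2*y-5) * (Real.exp (-(y-5/2)^2) * Real.exp (y-4)) by ring, e2]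
          ring
      _ ≤ ((1/3) * 2) * (Real.exp (-3/2) * Real.exp (-(y-7/2)^2)) := by
          apply mul_le_mul_of_nonneg_right _ (by positivity)
          exact mul_le_mul_of_nonneg_left hks (by norm_num)
      _ = (2/3)*Real.exp (-3/2) * Real.exp (-(y-7/2)^2) := by ring
  have hg : g2fun y = -((2*y-5) * Real.exp (-(y-5/2)^2) * Hker 1 (-(1/2)) 8 0 y) := by
    unfold g2fun; ring
  rw [hg]
  have expand : (2*y-5) * Real.exp (-(y-5/2)^2) * ((4/3)*Real.exp (12-y) + (1/3)*Real.exp (y-4))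
      = (2*y-5) * Real.exp (-(y-5/2)^2) * ((4/3)*Real.exp (12-y))
        + (2*y-5) * Real.exp (-(y-5/2)^2) * ((1/3)*Real.exp (y-4)) := by ring
  rw [expand] at hmain
  linarith

lemma g2_poly_ge (y : ℝ) (h2 : y ≤ 5/2) :
    (4/3)*Real.exp (19/2) * ((5/2-y) + (5/2-y)^2 - (5/2-y)^3) ≤ g2fun y := by
  have hH := Hker_ge y h2
  have hw : 0 ≤ 5 - 2*y := by linarith
  have step1 : (5-2*y) * Real.exp (-(y-5/2)^2) * ((2/3)*Real.exp (12-y)) ≤ g2fun y := by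
    unfold g2fun
    exact mul_le_mul_of_nonneg_left hH (mul_nonneg hw (Real.exp_pos _).le)
  have e3 : Real.exp (-(y-5/2)^2) * Real.exp (12-y)
      = Real.exp (19/2) * Real.exp ((5/2-y) - (5/2-y)^2) := by
    rw [← Real.exp_add, ← Real.exp_add]; ring_nf
  have hexp : (5/2-y) - (5/2-y)^2 + 1 ≤ Real.exp ((5/2-y) - (5/2-y)^2) := by
    have := Real.add_one_le_exp ((5/2-y) - (5/2-y)^2); linarith
  have lhs_eq : (5-2*y) * Real.exp (-(y-5/2)^2) * ((2/3)*Real.exp (12-y))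
      = (4/3)*Real.exp (19/2) * ((5/2-y) * Real.exp ((5/2-y) - (5/2-y)^2)) := by
    rw [show (5-2*y) * Real.exp (-(y-5/2)^2) * ((2/3)*Real.exp (12-y))
        = (2/3)*(5-2*y) * (Real.exp (-(y-5/2)^2) * Real.exp (12-y)) by ring, e3]
    ring
  have hmono : (5/2-y) * ((5/2-y) - (5/2-y)^2 + 1)
      ≤ (5/2-y) * Real.exp ((5/2-y) - (5/2-y)^2) :=
    mul_le_mul_of_nonneg_left hexp (by linarith)
  calc (4/3)*Real.exp (19/2) * ((5/2-y) + (5/2-y)^2 - (5/2-y)^3)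
      = (4/3)*Real.exp (19/2) * ((5/2-y) * ((5/2-y) - (5/2-y)^2 + 1)) := by ring
    _ ≤ (4/3)*Real.exp (19/2) * ((5/2-y) * Real.exp ((5/2-y) - (5/2-y)^2)) :=
        mul_le_mul_of_nonneg_left hmono (by positivity)
    _ = (5-2*y) * Real.exp (-(y-5/2)^2) * ((2/3)*Real.exp (12-y)) := lhs_eq.symm
    _ ≤ g2fun y := step1

lemma abs_g2_le (y : ℝ) (hy : 0 < y) :
    |g2fun y| ≤ 10 * Real.exp 18 * Real.exp (-(y-7/2)^2) := by
  have hHn := Hker_nonneg y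
  have hH := Hker_le y hy.le
  have hp : |5-2*y| ≤ 5*Real.exp y := by
    have h := Real.add_one_le_exp y
    rw [abs_le]; constructor <;> nlinarith
  have key : |g2fun y| ≤ 5*Real.exp y * Real.exp (-(y-5/2)^2)
      * ((4/3)*Real.exp (12-y) + (1/3)*Real.exp (y-4)) := by
    have heq : |g2fun y| = |5-2*y| * Real.exp (-(y-5/2)^2) * Hker 1 (-(1/2)) 8 0 y := by
      unfold g2fun
      rw [abs_mul, abs_mul, abs_of_pos (Real.exp_pos _), abs_of_nonneg hHn]
    rw [heq]
    apply mul_le_mul _ hH hHn (by positivity)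
    exact mul_le_mul_of_nonneg_right hp (Real.exp_pos _).le
  have A : Real.exp y * Real.exp (-(y-5/2)^2) * Real.exp (12-y)
      = Real.exp (-(y-5/2)^2 + 12) := by
    rw [← Real.exp_add, ← Real.exp_add]; ring_nf
  have B : Real.exp y * Real.exp (-(y-5/2)^2) * Real.exp (y-4)
      = Real.exp (-(y-7/2)^2 + 2) := by
    rw [← Real.exp_add, ← Real.exp_add]; ring_nf
  have expand : 5*Real.exp y * Real.exp (-(y-5/2)^2)
      * ((4/3)*Real.exp (12-y) + (1/3)*Real.exp (y-4))
      = (20/3) * (Real.exp y * Real.exp (-(y-5/2)^2) * Real.exp (12-y))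
        + (5/3) * (Real.exp y * Real.exp (-(y-5/2)^2) * Real.exp (y-4)) := by ring
  rw [expand, A, B] at key
  have C : Real.exp (-(y-5/2)^2 + 12) ≤ Real.exp 18 * Real.exp (-(y-7/2)^2) := by
    rw [← Real.exp_add]; apply Real.exp_le_exp.2; nlinarith
  have D : Real.exp (-(y-7/2)^2 + 2) ≤ Real.exp 18 * Real.exp (-(y-7/2)^2) := by
    rw [← Real.exp_add]; apply Real.exp_le_exp.2; linarith
  nlinarith [Real.exp_pos (-(y-7/2)^2), Real.exp_pos 18]

lemma measurable_g1 : Measurable g1fun := by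
  have heq : g1fun = fun y => Real.exp (-(y - 5/2)^2) *
      ((1 / Real.sqrt 8) * (Real.exp (2*y) * phi ((y + 8) / Real.sqrt 8)
          + phi ((8 - y) / Real.sqrt 8))
        - 2 * Real.exp (2*y) * Psi ((y + 8) / Real.sqrt 8)) := by
    funext y; unfold g1fun; rw [Gker_eval]
  rw [heq]
  have hphi : Continuous phi := by unfold phi; fun_prop
  have hPsi : Measurable fun y : ℝ => Psi ((y + 8) / Real.sqrt 8) :=
    measurable_Psi.comp ((measurable_id.add_const 8).div_const _)
  apply Measurable.mul (by fun_prop)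
  apply Measurable.sub
  · apply Measurable.const_mul
    exact ((Real.measurable_exp.comp (by fun_prop)).mul
        (hphi.measurable.comp ((measurable_id.add_const 8).div_const _))).add
      (hphi.measurable.comp (by fun_prop))
  · exact (measurable_const.mul (Real.measurable_exp.comp (by fun_prop))).mul hPsi

lemma measurable_g2 : Measurable g2fun := by
  have heq : g2fun = fun y => (5 - 2*y) * Real.exp (-(y - 5/2)^2) *
      ((4/3) * Real.exp (12 - y) * Psi ((y - 16) / Real.sqrt 8)
        + (2/3) * Real.exp (2*y) * Psi ((y + 8) / Real.sqrt 8)) := by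
    funext y; unfold g2fun; rw [Hker_eval]
  rw [heq]
  have hPsi1 : Measurable fun y : ℝ => Psi ((y - 16) / Real.sqrt 8) :=
    measurable_Psi.comp ((measurable_id.sub_const 16).div_const _)
  have hPsi2 : Measurable fun y : ℝ => Psi ((y + 8) / Real.sqrt 8) :=
    measurable_Psi.comp ((measurable_id.add_const 8).div_const _)
  apply Measurable.mul (by fun_prop)
  exact ((measurable_const.mul (Real.measurable_exp.comp (by fun_prop))).mul hPsi1).add
    ((measurable_const.mul (Real.measurable_exp.comp (by fun_prop))).mul hPsi2)

lemma intOn_g1 : IntegrableOn g1fun (Set.Ioi 0) := by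
  apply Integrable.mono' (((integrable_gauss_shift 3).const_mul 100).integrableOn)
    measurable_g1.aestronglyMeasurable
  filter_upwards [ae_restrict_mem measurableSet_Ioi] with y hy
  rw [Real.norm_eq_abs]
  exact abs_g1_le y hy

lemma intOn_g2 : IntegrableOn g2fun (Set.Ioi 0) := by
  apply Integrable.mono' (((integrable_gauss_shift (7/2)).const_mul
    (10 * Real.exp 18)).integrableOn) measurable_g2.aestronglyMeasurable
  filter_upwards [ae_restrict_mem measurableSet_Ioi] with y hy
  rw [Real.norm_eq_abs]
  exact abs_g2_le y hy

lemma g2_nonneg_on (y : ℝ) (h1 : 0 < y) (h2 : y ≤ 5/2) : 0 ≤ g2fun y := by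
  unfold g2fun
  exact mul_nonneg (mul_nonneg (by linarith) (Real.exp_pos _).le) (Hker_nonneg y)

lemma poly_integral :
    ∫ y in Set.Ioc ((9:ℝ)/10) (5/2),
        (4/3)*Real.exp (19/2)*((5/2-y) + (5/2-y)^2 - (5/2-y)^3)
      = (4/3)*Real.exp (19/2)*(1888/1875) := by
  rw [← intervalIntegral.integral_of_le (by norm_num : (9/10:ℝ) ≤ 5/2)]
  rw [intervalIntegral.integral_eq_sub_of_hasDerivAt
    (f := fun z : ℝ => (4/3)*Real.exp (19/2)*(-(5/2-z)^2/2 - (5/2-z)^3/3 + (5/2-z)^4/4))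
    (f' := fun y : ℝ => (4/3)*Real.exp (19/2)*((5/2-y) + (5/2-y)^2 - (5/2-y)^3))
    ?hderiv ?hint]
  · norm_num
  case hderiv =>
    intro y _
    have hw : HasDerivAt (fun z : ℝ => (5/2 - z)) (-1) y := (hasDerivAt_id y).const_sub (5/2)
    have h := (((hw.pow 2).div_const 2).neg.sub ((hw.pow 3).div_const 3)).add
      ((hw.pow 4).div_const 4)
    have h2 := h.const_mul ((4/3)*Real.exp (19/2))
    refine (h2.congr_deriv (by push_cast; ring)).congr_of_eventuallyEq
      (Filter.Eventually.of_forall fun z => ?_)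
    simp only [Pi.add_apply, Pi.sub_apply, Pi.neg_apply, Pi.pow_apply]; ring
  case hint => exact Continuous.intervalIntegrable (by fun_prop) _ _

lemma hI1 : ∫ y in Set.Ioi (0:ℝ), g1fun y ≤ 3/5 := by
  have hm1 : IntegrableOn
      (fun y : ℝ => (4/25) * (Real.exp (-(y-3)^2) + Real.exp (-(y-5/2)^2)))
      (Set.Ioi 0) :=
    (((integrable_gauss_shift 3).add (integrable_gauss_shift (5/2))).const_mul
      (4/25)).integrableOn
  have step1 : ∫ y in Set.Ioi (0:ℝ), g1fun y
      ≤ ∫ y in Set.Ioi (0:ℝ), (4/25) * (Real.exp (-(y-3)^2) + Real.exp (-(y-5/2)^2)) :=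
    setIntegral_mono_on intOn_g1 hm1 measurableSet_Ioi (fun y hy => g1_le y (le_of_lt hy))
  have step2 : ∫ y in Set.Ioi (0:ℝ), (4/25) * (Real.exp (-(y-3)^2) + Real.exp (-(y-5/2)^2))
      = (4/25) * ((∫ y in Set.Ioi (0:ℝ), Real.exp (-(y-3)^2))
          + ∫ y in Set.Ioi (0:ℝ), Real.exp (-(y-5/2)^2)) := by
    rw [integral_const_mul, integral_add ((integrable_gauss_shift 3).integrableOn)
      ((integrable_gauss_shift (5/2)).integrableOn)]
  rw [step2] at step1
  have b1 := integral_Ioi_gauss_le 0 3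
  have b2 := integral_Ioi_gauss_le 0 (5/2)
  have hsp := sqrt_pi_le
  linarith

lemma hI2 : (1:ℝ) ≤ ∫ y in Set.Ioi (0:ℝ), g2fun y := by
  have hIoc : IntegrableOn g2fun (Set.Ioc 0 (5/2)) :=
    intOn_g2.mono_set Set.Ioc_subset_Ioi_self
  have hIoi52 : IntegrableOn g2fun (Set.Ioi (5/2)) :=
    intOn_g2.mono_set (Set.Ioi_subset_Ioi (by norm_num))
  have hsplit : ∫ y in Set.Ioi (0:ℝ), g2fun y
      = (∫ y in Set.Ioc (0:ℝ) (5/2), g2fun y) + ∫ y in Set.Ioi (5/2:ℝ), g2fun y := by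
    rw [← Set.Ioc_union_Ioi_eq_Ioi (by norm_num : (0:ℝ) ≤ 5/2),
      setIntegral_union (Set.Ioc_disjoint_Ioi le_rfl) measurableSet_Ioi hIoc hIoi52]
  -- positive part
  have hposA : ∫ y in Set.Ioc ((9:ℝ)/10) (5/2), g2fun y
      ≤ ∫ y in Set.Ioc (0:ℝ) (5/2), g2fun y := by
    apply setIntegral_mono_set hIoc
    · filter_upwards [ae_restrict_mem measurableSet_Ioc] with y hy
      exact g2_nonneg_on y hy.1 hy.2
    · exact HasSubset.Subset.eventuallyLE (Set.Ioc_subset_Ioc_left (by norm_num))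
  have hpolyint : IntegrableOn
      (fun y : ℝ => (4/3)*Real.exp (19/2)*((5/2-y) + (5/2-y)^2 - (5/2-y)^3))
      (Set.Ioc ((9:ℝ)/10) (5/2)) := Continuous.integrableOn_Ioc (by fun_prop)
  have hposB : ∫ y in Set.Ioc ((9:ℝ)/10) (5/2),
        (4/3)*Real.exp (19/2)*((5/2-y) + (5/2-y)^2 - (5/2-y)^3)
      ≤ ∫ y in Set.Ioc ((9:ℝ)/10) (5/2), g2fun y :=
    setIntegral_mono_on hpolyint
      (hIoc.mono_set (Set.Ioc_subset_Ioc_left (by norm_num))) measurableSet_Ioc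
      (fun y hy => g2_poly_ge y hy.2)
  -- negative part
  have hm2int1 : Integrable (fun y : ℝ => (8/3)*Real.exp (17/2) * Real.exp (-(y-5/2)^2)) := by
    have := (integrable_gauss_shift (5/2)).const_mul ((8/3)*Real.exp (17/2))
    refine this.congr ?_
    filter_upwards with y using by ring
  have hm2int2 : Integrable (fun y : ℝ => (2/3)*Real.exp (-3/2) * Real.exp (-(y-7/2)^2)) := by
    have := (integrable_gauss_shift (7/2)).const_mul ((2/3)*Real.exp (-3/2))
    refine this.congr ?_
    filter_upwards with y using by ring
  have hnegA : ∫ y in Set.Ioi (5/2:ℝ),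
        -((8/3)*Real.exp (17/2) * Real.exp (-(y-5/2)^2)
          + (2/3)*Real.exp (-3/2) * Real.exp (-(y-7/2)^2))
      ≤ ∫ y in Set.Ioi (5/2:ℝ), g2fun y :=
    setIntegral_mono_on ((hm2int1.add hm2int2).neg).integrableOn hIoi52 measurableSet_Ioi
      (fun y hy => g2_tail_ge y (le_of_lt hy))
  have hnegB : ∫ y in Set.Ioi (5/2:ℝ),
        ((8/3)*Real.exp (17/2) * Real.exp (-(y-5/2)^2)
          + (2/3)*Real.exp (-3/2) * Real.exp (-(y-7/2)^2))
      ≤ (8/3)*Real.exp (17/2) * (Real.sqrt Real.pi / 2)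
        + (2/3)*Real.exp (-3/2) * Real.sqrt Real.pi := by
    rw [integral_add hm2int1.integrableOn hm2int2.integrableOn]
    have e1 : ∫ y in Set.Ioi (5/2:ℝ), (8/3)*Real.exp (17/2) * Real.exp (-(y-5/2)^2)
        = (8/3)*Real.exp (17/2) * (Real.sqrt Real.pi/2) := by
      rw [integral_const_mul, integral_Ioi_gauss_shift]
    have e2 : ∫ y in Set.Ioi (5/2:ℝ), (2/3)*Real.exp (-3/2) * Real.exp (-(y-7/2)^2)
        ≤ (2/3)*Real.exp (-3/2) * Real.sqrt Real.pi := by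
      rw [integral_const_mul]
      exact mul_le_mul_of_nonneg_left (integral_Ioi_gauss_le _ _) (by positivity)
    linarith
  rw [integral_neg] at hnegA
  -- numerics
  have hE19 : Real.exp (19/2) = Real.exp 1 * Real.exp (17/2) := by
    rw [← Real.exp_add]; norm_num
  have hE1 : (2.71:ℝ) ≤ Real.exp 1 := by linarith [Real.exp_one_gt_d9]
  have hE17 : (2.71:ℝ) ≤ Real.exp (17/2) :=
    le_trans hE1 (Real.exp_le_exp.2 (by norm_num))
  have hsp := sqrt_pi_le
  have hsp0 : (0:ℝ) ≤ Real.sqrt Real.pi := Real.sqrt_nonneg _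
  have hm : Real.exp (-3/2) ≤ 1 := Real.exp_le_one_iff.mpr (by norm_num)
  have hm0 : (0:ℝ) < Real.exp (-3/2) := Real.exp_pos _
  have c1 : (0.94:ℝ) ≤ (1888/1875)*Real.exp 1 - Real.sqrt Real.pi := by nlinarith
  have c3 : (4/3:ℝ)*2.71*0.94
      ≤ (4/3)*(Real.exp (17/2) * ((1888/1875)*Real.exp 1 - Real.sqrt Real.pi)) := by
    nlinarith [mul_le_mul hE17 c1 (by norm_num) (by positivity :
      (0:ℝ) ≤ Real.exp (17/2))]
  have c4 : Real.exp (-3/2) * Real.sqrt Real.pi ≤ 1.78 := by nlinarith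
  have hX : (4/3)*Real.exp (19/2)*(1888/1875)
      - ((8/3)*Real.exp (17/2) * (Real.sqrt Real.pi / 2)
        + (2/3)*Real.exp (-3/2) * Real.sqrt Real.pi)
      = (4/3)*(Real.exp (17/2)*((1888/1875)*Real.exp 1 - Real.sqrt Real.pi))
        - (2/3)*(Real.exp (-3/2) * Real.sqrt Real.pi) := by
    rw [hE19]; ring
  rw [hsplit]
  have := poly_integral
  nlinarith [hposA, hposB, hnegA, hnegB]

end Bounds

/-- for `μ = 1`, `ν = -1/2` and `f(x) = exp(-(x - 5/2)²)` the
solution given by the integral formula takes negative values even though the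
initial data `f` is strictly positive. -/
theorem solution_takes_negative_values :
    (∀ x : ℝ, 0 < Real.exp (-(x - 5 / 2) ^ 2)) ∧
    ∃ t > (0 : ℝ), ∃ x ≥ (0 : ℝ),
      ((∫ y in Set.Ioi (0 : ℝ),
          Real.exp (-(y - 5 / 2) ^ 2) * Gker 1 t x y) -
        ∫ y in Set.Ioi (0 : ℝ),
          deriv (fun z => Real.exp (-(z - 5 / 2) ^ 2)) y *
            Hker 1 (-(1 / 2)) t x y) < 0 := by
  refine ⟨fun x => Real.exp_pos _, 8, by norm_num, 0, le_refl 0, ?_⟩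
  have hrw1 : (fun y : ℝ => Real.exp (-(y - 5 / 2) ^ 2) * Gker 1 8 0 y) = g1fun := rfl
  have hrw2 : (fun y : ℝ => deriv (fun z => Real.exp (-(z - 5 / 2) ^ 2)) y *
      Hker 1 (-(1 / 2)) 8 0 y) = g2fun := by
    funext y; rw [deriv_f]; unfold g2fun; ring
  rw [hrw1, hrw2]
  linarith [hI1, hI2]
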